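/- The second fundamental form of the dihedral Enneper parametrization of order n with respect to the unit normal ν is given, for all u > 0 and v ∈ ℝ, by e = σⁿ_{uu}·ν = −n·u^{n−1}cos((n+1)v), f = σⁿ_{uv}·ν = n·uⁿ·sin((n+1)v), and g = σⁿ_{vv}·ν = n·u^{n+1}cos((n+1)v). -/

import Mathlib

noncomputable section
open MeasureTheory Real

/-- Dot product on `ℝ³ = ℝ × ℝ × ℝ`. -/
def dot3 (a b : ℝ × ℝ × ℝ) : ℝ := a.1 * b.1 + a.2.1 * b.2.1 + a.2.2 * b.2.2

/-- Euclidean norm on `ℝ³ = ℝ × ℝ × ℝ`. -/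
def norm3 (a : ℝ × ℝ × ℝ) : ℝ := Real.sqrt (dot3 a a)

/-- Partial derivative in the first (`u`) variable. -/
def pdU {E : Type*} [NormedAddCommGroup E] [NormedSpace ℝ E] (f : ℝ × ℝ → E) (p : ℝ × ℝ) : E :=
  deriv (fun x => f (x, p.2)) p.1

/-- Partial derivative in the second (`v`) variable. -/
def pdV {E : Type*} [NormedAddCommGroup E] [NormedSpace ℝ E] (f : ℝ × ℝ → E) (p : ℝ × ℝ) : E :=
  deriv (fun y => f (p.1, y)) p.2

/-- The dihedral Enneper parametrization `σⁿ` of order `n`. -/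
def enneper (n : ℕ) (p : ℝ × ℝ) : ℝ × ℝ × ℝ :=
  (p.1 * ((2 * (n : ℝ) + 1) * Real.cos p.2 - p.1 ^ (2 * n) * Real.cos ((2 * (n : ℝ) + 1) * p.2))
      / (4 * (n : ℝ) + 2),
   -(p.1 * ((2 * (n : ℝ) + 1) * Real.sin p.2 + p.1 ^ (2 * n) * Real.sin ((2 * (n : ℝ) + 1) * p.2)))
      / (4 * (n : ℝ) + 2),
   p.1 ^ (n + 1) * Real.cos (((n : ℝ) + 1) * p.2) / ((n : ℝ) + 1))

/-- The unit normal `ν` of the dihedral Enneper parametrization of order `n`. -/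
def enneperNormal (n : ℕ) (p : ℝ × ℝ) : ℝ × ℝ × ℝ :=
  (1 + p.1 ^ (2 * n))⁻¹ •
    (2 * p.1 ^ n * Real.cos ((n : ℝ) * p.2),
     2 * p.1 ^ n * Real.sin ((n : ℝ) * p.2),
     p.1 ^ (2 * n) - 1)
/-! The `u`-dependence of `σⁿ` is polynomial and its `v`-dependence trigonometric, so all first
and second partial derivatives have closed forms. Pairing them with `ν`, whose horizontal part
points in direction `nv`, only the angles `(2n+1)v - nv` and `v + nv` occur, both equal to
`(n+1)v`; after the addition formulas each component of the second fundamental form is a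
polynomial identity in `u`, `uⁿ` and the trigonometric values of `(n+1)v`, `nv`. -/

theorem cos_mul_cos_add_sin_mul_sin_of_sub_eq {x y z : ℝ} (h : x - y = z) :
    cos x * cos y + sin x * sin y = cos z := by
  rw [← h, cos_sub]

theorem sin_mul_cos_sub_cos_mul_sin_of_sub_eq {x y z : ℝ} (h : x - y = z) :
    sin x * cos y - cos x * sin y = sin z := by
  rw [← h, sin_sub]

theorem cos_mul_cos_sub_sin_mul_sin_of_add_eq {x y z : ℝ} (h : x + y = z) :
    cos x * cos y - sin x * sin y = cos z := by
  rw [← h, cos_add]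

theorem sin_mul_cos_add_cos_mul_sin_of_add_eq {x y z : ℝ} (h : x + y = z) :
    sin x * cos y + cos x * sin y = sin z := by
  rw [← h, sin_add]

section

variable (n : ℕ)

theorem enneper_apply (u v : ℝ) : enneper n (u, v) =
    (cos v / 2 * u - cos ((2 * (n : ℝ) + 1) * v) / (4 * (n : ℝ) + 2) * u ^ (2 * n + 1),
     -(sin v / 2 * u) - sin ((2 * (n : ℝ) + 1) * v) / (4 * (n : ℝ) + 2) * u ^ (2 * n + 1),
     cos (((n : ℝ) + 1) * v) / ((n : ℝ) + 1) * u ^ (n + 1)) := by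
  simp only [enneper, Prod.mk.injEq]
  refine ⟨?_, ?_, ?_⟩ <;> field_simp <;> ring

def enneperU (p : ℝ × ℝ) : ℝ × ℝ × ℝ :=
  ((cos p.2 - p.1 ^ (2 * n) * cos ((2 * (n : ℝ) + 1) * p.2)) / 2,
   -(sin p.2 + p.1 ^ (2 * n) * sin ((2 * (n : ℝ) + 1) * p.2)) / 2,
   p.1 ^ n * cos (((n : ℝ) + 1) * p.2))

def enneperV (p : ℝ × ℝ) : ℝ × ℝ × ℝ :=
  (p.1 * (-sin p.2 + p.1 ^ (2 * n) * sin ((2 * (n : ℝ) + 1) * p.2)) / 2,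
   -(p.1 * (cos p.2 + p.1 ^ (2 * n) * cos ((2 * (n : ℝ) + 1) * p.2))) / 2,
   -(p.1 ^ (n + 1) * sin (((n : ℝ) + 1) * p.2)))

theorem pdU_enneper : pdU (enneper n) = enneperU n := by
  funext ⟨u, v⟩
  simp only [pdU, enneper_apply]
  refine (HasDerivAt.prodMk
    (((hasDerivAt_id' u).const_mul _).fun_sub ((hasDerivAt_pow (2 * n + 1) u).const_mul _))
    ((((hasDerivAt_id' u).const_mul _).fun_neg.fun_sub
        ((hasDerivAt_pow (2 * n + 1) u).const_mul _)).prodMk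
      ((hasDerivAt_pow (n + 1) u).const_mul _))).deriv.trans ?_
  simp only [enneperU, Prod.mk.injEq, Nat.add_sub_cancel]
  push_cast
  refine ⟨?_, ?_, ?_⟩ <;> field_simp <;> ring

theorem pdV_enneper : pdV (enneper n) = enneperV n := by
  funext ⟨u, v⟩
  simp only [pdV, enneper_apply]
  refine (HasDerivAt.prodMk
    (((hasDerivAt_cos v).div_const _).mul_const _ |>.fun_sub
      ((((hasDerivAt_id' v).const_mul _).cos.div_const _).mul_const _))
    ((((hasDerivAt_sin v).div_const _).mul_const _ |>.fun_neg.fun_sub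
      ((((hasDerivAt_id' v).const_mul _).sin.div_const _).mul_const _)).prodMk
      ((((hasDerivAt_id' v).const_mul _).cos.div_const _).mul_const _))).deriv.trans ?_
  simp only [enneperV, Prod.mk.injEq]
  refine ⟨?_, ?_, ?_⟩ <;> field_simp <;> ring

theorem pdU_enneperU (p : ℝ × ℝ) : pdU (enneperU n) p =
    (-((n : ℝ) * p.1 ^ (n - 1) * p.1 ^ n * cos ((2 * (n : ℝ) + 1) * p.2)),
     -((n : ℝ) * p.1 ^ (n - 1) * p.1 ^ n * sin ((2 * (n : ℝ) + 1) * p.2)),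
     (n : ℝ) * p.1 ^ (n - 1) * cos (((n : ℝ) + 1) * p.2)) := by
  obtain ⟨u, v⟩ := p
  have hpow := hasDerivAt_pow n u
  -- `u ^ (2 * n)` is differentiated as `u ^ n * u ^ n`, so the truncated exponent `n - 1`
  -- only ever occurs in the factor `n * u ^ (n - 1)`
  simp only [pdU, enneperU, pow_mul', sq]
  refine (HasDerivAt.prodMk
    ((((hpow.fun_mul hpow).mul_const _).const_sub _).div_const _)
    (((((hpow.fun_mul hpow).mul_const _).const_add _).fun_neg.div_const _).prodMk
      (hpow.mul_const _))).deriv.trans ?_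
  simp only [Prod.mk.injEq, and_true]
  constructor <;> ring

theorem pdV_enneperU (p : ℝ × ℝ) : pdV (enneperU n) p =
    ((-sin p.2 + (2 * (n : ℝ) + 1) * p.1 ^ (2 * n) * sin ((2 * (n : ℝ) + 1) * p.2)) / 2,
     -(cos p.2 + (2 * (n : ℝ) + 1) * p.1 ^ (2 * n) * cos ((2 * (n : ℝ) + 1) * p.2)) / 2,
     -(((n : ℝ) + 1) * p.1 ^ n * sin (((n : ℝ) + 1) * p.2))) := by
  obtain ⟨u, v⟩ := p
  simp only [pdV, enneperU]
  refine (HasDerivAt.prodMk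
    (((hasDerivAt_cos v).fun_sub (((hasDerivAt_id' v).const_mul _).cos.const_mul _)).div_const _)
    ((((hasDerivAt_sin v).fun_add
        (((hasDerivAt_id' v).const_mul _).sin.const_mul _)).fun_neg.div_const _).prodMk
      (((hasDerivAt_id' v).const_mul _).cos.const_mul _))).deriv.trans ?_
  simp only [Prod.mk.injEq]
  refine ⟨?_, ?_, ?_⟩ <;> ring

theorem pdV_enneperV (p : ℝ × ℝ) : pdV (enneperV n) p =
    (p.1 * (-cos p.2 + (2 * (n : ℝ) + 1) * p.1 ^ (2 * n) * cos ((2 * (n : ℝ) + 1) * p.2)) / 2,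
     p.1 * (sin p.2 + (2 * (n : ℝ) + 1) * p.1 ^ (2 * n) * sin ((2 * (n : ℝ) + 1) * p.2)) / 2,
     -(((n : ℝ) + 1) * p.1 ^ (n + 1) * cos (((n : ℝ) + 1) * p.2))) := by
  obtain ⟨u, v⟩ := p
  simp only [pdV, enneperV]
  refine (HasDerivAt.prodMk
    ((((hasDerivAt_sin v).fun_neg.fun_add
        (((hasDerivAt_id' v).const_mul _).sin.const_mul _)).const_mul u).div_const _)
    (((((hasDerivAt_cos v).fun_add
        (((hasDerivAt_id' v).const_mul _).cos.const_mul _)).const_mul u).fun_neg.div_const _).prodMk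
      (((hasDerivAt_id' v).const_mul _).sin.const_mul _).fun_neg)).deriv.trans ?_
  simp only [Prod.mk.injEq]
  refine ⟨?_, ?_, ?_⟩ <;> ring

theorem dot3_enneperNormal_eq_of {X : ℝ × ℝ × ℝ} {p : ℝ × ℝ} {r : ℝ}
    (h : 2 * p.1 ^ n * (X.1 * cos (n * p.2) + X.2.1 * sin (n * p.2)) + X.2.2 * (p.1 ^ (2 * n) - 1)
      = r * (1 + p.1 ^ (2 * n))) :
    dot3 X (enneperNormal n p) = r := by
  have hpos : 0 < 1 + p.1 ^ (2 * n) := by rw [pow_mul]; positivity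
  simp only [dot3, enneperNormal, Prod.smul_mk, smul_eq_mul]
  field_simp
  linear_combination h

theorem dot3_pdU_pdU_enneper (p : ℝ × ℝ) :
    dot3 (pdU (pdU (enneper n)) p) (enneperNormal n p)
      = -(n : ℝ) * p.1 ^ (n - 1) * cos (((n : ℝ) + 1) * p.2) := by
  obtain ⟨u, v⟩ := p
  have h := cos_mul_cos_add_sin_mul_sin_of_sub_eq
    (by ring : (2 * (n : ℝ) + 1) * v - n * v = ((n : ℝ) + 1) * v)
  rw [pdU_enneper, pdU_enneperU]
  refine dot3_enneperNormal_eq_of n ?_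
  linear_combination (-2 * (n : ℝ) * u ^ (n - 1) * u ^ (2 * n)) * h

theorem dot3_pdV_pdU_enneper (p : ℝ × ℝ) :
    dot3 (pdV (pdU (enneper n)) p) (enneperNormal n p)
      = (n : ℝ) * p.1 ^ n * sin (((n : ℝ) + 1) * p.2) := by
  obtain ⟨u, v⟩ := p
  have h₁ := sin_mul_cos_sub_cos_mul_sin_of_sub_eq
    (by ring : (2 * (n : ℝ) + 1) * v - n * v = ((n : ℝ) + 1) * v)
  have h₂ := sin_mul_cos_add_cos_mul_sin_of_add_eq (by ring : v + n * v = ((n : ℝ) + 1) * v)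
  rw [pdU_enneper, pdV_enneperU]
  refine dot3_enneperNormal_eq_of n ?_
  linear_combination ((2 * (n : ℝ) + 1) * u ^ (3 * n)) * h₁ - u ^ n * h₂

theorem dot3_pdV_pdV_enneper (p : ℝ × ℝ) :
    dot3 (pdV (pdV (enneper n)) p) (enneperNormal n p)
      = (n : ℝ) * p.1 ^ (n + 1) * cos (((n : ℝ) + 1) * p.2) := by
  obtain ⟨u, v⟩ := p
  have h₁ := cos_mul_cos_add_sin_mul_sin_of_sub_eq
    (by ring : (2 * (n : ℝ) + 1) * v - n * v = ((n : ℝ) + 1) * v)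
  have h₂ := cos_mul_cos_sub_sin_mul_sin_of_add_eq (by ring : v + n * v = ((n : ℝ) + 1) * v)
  rw [pdV_enneper, pdV_enneperV]
  refine dot3_enneperNormal_eq_of n ?_
  linear_combination ((2 * (n : ℝ) + 1) * u ^ (3 * n + 1)) * h₁ - u ^ (n + 1) * h₂

end

theorem enneper_secondFundamentalForm_general (n : ℕ) :
    ∀ p : ℝ × ℝ, 0 < p.1 →
      dot3 (pdU (pdU (enneper n)) p) (enneperNormal n p)
        = -(n : ℝ) * p.1 ^ (n - 1) * Real.cos (((n : ℝ) + 1) * p.2) ∧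
      dot3 (pdV (pdU (enneper n)) p) (enneperNormal n p)
        = (n : ℝ) * p.1 ^ n * Real.sin (((n : ℝ) + 1) * p.2) ∧
      dot3 (pdV (pdV (enneper n)) p) (enneperNormal n p)
        = (n : ℝ) * p.1 ^ (n + 1) * Real.cos (((n : ℝ) + 1) * p.2) :=
  fun p _ => ⟨dot3_pdU_pdU_enneper n p, dot3_pdV_pdU_enneper n p, dot3_pdV_pdV_enneper n p⟩

/-- the second fundamental form of the dihedral Enneper parametrization of
order `n ≥ 1` with respect to `ν` is `e = −n·u^{n−1}cos((n+1)v)`, `f = n·uⁿ·sin((n+1)v)`,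
`g = n·u^{n+1}cos((n+1)v)` for all `u > 0` and `v ∈ ℝ`. -/
theorem enneper_secondFundamentalForm (n : ℕ) (hn : 1 ≤ n) :
    ∀ p : ℝ × ℝ, 0 < p.1 →
      dot3 (pdU (pdU (enneper n)) p) (enneperNormal n p)
        = -(n : ℝ) * p.1 ^ (n - 1) * Real.cos (((n : ℝ) + 1) * p.2) ∧
      dot3 (pdV (pdU (enneper n)) p) (enneperNormal n p)
        = (n : ℝ) * p.1 ^ n * Real.sin (((n : ℝ) + 1) * p.2) ∧
      dot3 (pdV (pdV (enneper n)) p) (enneperNormal n p)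
        = (n : ℝ) * p.1 ^ (n + 1) * Real.cos (((n : ℝ) + 1) * p.2) :=
  enneper_secondFundamentalForm_general n
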